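/- Let p_1, …, p_n be pairwise distinct primes and for each i let P_i be a non-trivial elementary abelian p_i-group. Then the iterated regular wreath product W = ((…(P_1 ≀ P_2) ≀ … ) ≀ P_{n-1}) ≀ P_n, formed with each factor acting in its regular representation, has Fitting height n and exponent p_1⋯p_n; in particular h(W) = Ω(exp(W)). -/

import Mathlib

open Pointwise
open scoped commutatorElement

/-- The Fitting subgroup of a group: the largest nilpotent normal subgroup
(defined as the join of all nilpotent normal subgroups). -/
def FittingSubgroup (G : Type*) [Group G] : Subgroup G :=
  sSup {H : Subgroup G | H.Normal ∧ Group.IsNilpotent H}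

theorem FittingSubgroup_normal (G : Type*) [Group G] : (FittingSubgroup G).Normal := by
  constructor
  intro x hx g
  rw [FittingSubgroup, sSup_eq_iSup'] at hx ⊢
  refine Subgroup.iSup_induction _ (C := fun y => g * y * g⁻¹ ∈ _) hx ?_ ?_ ?_
  · rintro ⟨H, hHn, hHnil⟩ y hy
    exact Subgroup.mem_iSup_of_mem ⟨H, hHn, hHnil⟩ (hHn.conj_mem y hy g)
  · simpa using Subgroup.one_mem _
  · intro y z hy hz
    have h : g * (y * z) * g⁻¹ = g * y * g⁻¹ * (g * z * g⁻¹) := by group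
    rw [h]; exact Subgroup.mul_mem _ hy hz

/-- The Fitting series of a group, together with the proof of normality of its terms:
`F 0 = ⊥` and `F (i+1) / F i = FittingSubgroup (G ⧸ F i)`. -/
noncomputable def fittingSeriesAux (G : Type*) [Group G] : ℕ → {H : Subgroup G // H.Normal}
  | 0 => ⟨⊥, inferInstance⟩
  | n + 1 =>
    let N := fittingSeriesAux G n
    haveI : N.1.Normal := N.2
    ⟨(FittingSubgroup (G ⧸ N.1)).comap (QuotientGroup.mk' N.1),
      (FittingSubgroup_normal _).comap _⟩

/-- The Fitting series of a group. -/
noncomputable def fittingSeries (G : Type*) [Group G] (n : ℕ) : Subgroup G :=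
  (fittingSeriesAux G n).1

/-- The Fitting height: the least `n` with `fittingSeries G n = ⊤`. -/
noncomputable def fittingHeight (G : Type*) [Group G] : ℕ :=
  sInf {n | fittingSeries G n = ⊤}

/-- `rho G 0 = G`, `rho G 1 = ⋂ i, γ_i(G)` (the nilpotent residual), and
`rho G (k+1) = ρ₁(rho G k)` viewed as a subgroup of `G`. -/
noncomputable def rho (G : Type*) [Group G] : ℕ → Subgroup G
  | 0 => ⊤
  | n + 1 => Subgroup.map (rho G n).subtype (⨅ i : ℕ, Subgroup.lowerCentralSeries (⊤ : Subgroup (rho G n)) i)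

/-- `Ω m`: the number of prime divisors of `m`, counted with multiplicity. -/
def bigOmega (m : ℕ) : ℕ := m.primeFactorsList.length

/-- A Fermat prime is a prime of the form `2 ^ 2 ^ k + 1`. -/
def IsFermatPrime (p : ℕ) : Prop := p.Prime ∧ ∃ k : ℕ, p = 2 ^ 2 ^ k + 1

open Classical in
/-- `Ω₁ m`: the number of odd Fermat prime divisors of `m`, counted with multiplicity. -/
noncomputable def bigOmegaOne (m : ℕ) : ℕ :=
  (m.primeFactorsList.filter fun p => Odd p ∧ IsFermatPrime p).length

/-- A tower of height `n` in `G`: subgroups `P n, …, P 1` such that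
(1) each `P i` is a non-trivial `p i`-group with `p (i+1) ≠ p i`,
(2) `P i` normalizes `P j` for `i < j`, and
(3) with `C n = 1` and `C i = C_{P i}(P (i+1) / C (i+1))`, one has
`[P i / C i, P (i-1)] = P i / C i`, expressed as `⁅P i, P (i-1)⁆ ⊔ C i = P i`. -/
def IsTower {G : Type*} [Group G] (n : ℕ) (P : ℕ → Subgroup G) : Prop :=
  (∀ i, 1 ≤ i → i ≤ n → P i ≠ ⊥) ∧
  (∃ p : ℕ → ℕ,
    (∀ i, 1 ≤ i → i ≤ n → (p i).Prime ∧ IsPGroup (p i) (P i)) ∧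
    (∀ i, 1 ≤ i → i + 1 ≤ n → p (i + 1) ≠ p i)) ∧
  (∀ i j, 1 ≤ i → i < j → j ≤ n → ∀ x ∈ P i, ∀ y ∈ P j, x * y * x⁻¹ ∈ P j) ∧
  (∃ C : ℕ → Subgroup G,
    C n = ⊥ ∧
    (∀ i, 1 ≤ i → i < n →
      (C i : Set G) = {x | x ∈ P i ∧ ∀ y ∈ P (i + 1), x * y * x⁻¹ * y⁻¹ ∈ C (i + 1)}) ∧
    (∀ i, 2 ≤ i → i ≤ n → ⁅P i, P (i - 1)⁆ ⊔ C i = P i))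

/-- A weak tower: as a tower, but with condition (3) replaced by the non-triviality
of all the quotients `P i / C i`. -/
def IsWeakTower {G : Type*} [Group G] (n : ℕ) (P : ℕ → Subgroup G) : Prop :=
  (∃ p : ℕ → ℕ,
    (∀ i, 1 ≤ i → i ≤ n → (p i).Prime ∧ IsPGroup (p i) (P i)) ∧
    (∀ i, 1 ≤ i → i + 1 ≤ n → p (i + 1) ≠ p i)) ∧
  (∀ i j, 1 ≤ i → i < j → j ≤ n → ∀ x ∈ P i, ∀ y ∈ P j, x * y * x⁻¹ ∈ P j) ∧
  (∃ C : ℕ → Subgroup G,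
    C n = ⊥ ∧
    (∀ i, 1 ≤ i → i < n →
      (C i : Set G) = {x | x ∈ P i ∧ ∀ y ∈ P (i + 1), x * y * x⁻¹ * y⁻¹ ∈ C (i + 1)}) ∧
    (∀ i, 1 ≤ i → i ≤ n → C i ≠ P i))

open scoped Pointwise in
/-- `mulFrom P n k` is the setwise product `P n * P (n-1) * ⋯ * P (n - k + 1)`;
in particular `mulFrom P n n = P n * ⋯ * P 1`. -/
def mulFrom {G : Type*} [Group G] (P : ℕ → Subgroup G) (n : ℕ) : ℕ → Set G
  | 0 => 1
  | k + 1 => mulFrom P n k * (P (n - k) : Set G)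

open Classical in
/-- The `p`-length of `G`: the least number of (non-trivial) `p`-factors in a normal series
of `G` all of whose factors are `p`-groups or `p'`-groups. -/
noncomputable def pLength (p : ℕ) (G : Type*) [Group G] : ℕ :=
  sInf {l | ∃ (k : ℕ) (N : ℕ → Subgroup G),
    N 0 = ⊥ ∧ N k = ⊤ ∧ (∀ i, i < k → N i ≤ N (i + 1)) ∧ (∀ i, (N i).Normal) ∧
    (∀ i, i < k →
      (∀ x ∈ N (i + 1), ∃ m : ℕ, x ^ p ^ m ∈ N i) ∨
      (∀ x ∈ N (i + 1), ∃ m : ℕ, 0 < m ∧ m.Coprime p ∧ x ^ m ∈ N i)) ∧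
    l = ((Finset.range k).filter fun i =>
      (∀ x ∈ N (i + 1), ∃ m : ℕ, x ^ p ^ m ∈ N i) ∧ N i ≠ N (i + 1)).card}

universe u

/-- The automorphism of `B → A` given by permuting coordinates via left translation by `b`. -/
def wreathAut {A B : Type*} [Group A] [Group B] (b : B) : MulAut (B → A) where
  toFun f := fun x => f (b⁻¹ * x)
  invFun f := fun x => f (b * x)
  left_inv f := by funext x; simp [mul_assoc]
  right_inv f := by funext x; simp [mul_assoc]
  map_mul' f g := rfl

/-- The regular action of `B` on the direct power `B → A`. -/
def wreathAction (A B : Type*) [Group A] [Group B] : B →* MulAut (B → A) where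
  toFun := wreathAut
  map_one' := by ext f x; simp [wreathAut]
  map_mul' a b := by ext f x; simp [wreathAut, mul_assoc]

/-- The regular wreath product `A ≀ B`: the semidirect product of the direct power
`B → A` by `B`, with `B` acting by permuting coordinates via its regular action. -/
abbrev regularWreath (A B : Type*) [Group A] [Group B] :=
  SemidirectProduct (B → A) B (wreathAction A B)

/-- The iterated regular wreath product `((…((P 0) ≀ (P 1)) ≀ …) ≀ (P n)`. -/
noncomputable def iterWreath (P : ℕ → GrpCat.{u}) : ℕ → GrpCat.{u}
  | 0 => P 0
  | n + 1 => GrpCat.of (regularWreath (iterWreath P n) (P (n + 1)))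

section Basics
variable {G : Type*} [Group G]

theorem le_fittingSubgroup {H : Subgroup G} (hn : H.Normal) (hnil : Group.IsNilpotent H) :
    H ≤ FittingSubgroup G := le_sSup ⟨hn, hnil⟩

instance fittingSeries_normal (G : Type*) [Group G] (n : ℕ) : (fittingSeries G n).Normal :=
  (fittingSeriesAux G n).2

theorem fittingSeries_zero (G : Type*) [Group G] : fittingSeries G 0 = ⊥ := rfl

theorem fittingSeries_succ (G : Type*) [Group G] (n : ℕ) :
    fittingSeries G (n + 1) =
      (FittingSubgroup (G ⧸ fittingSeries G n)).comap (QuotientGroup.mk' (fittingSeries G n)) :=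
  rfl

theorem fittingSeries_le_succ (G : Type*) [Group G] (n : ℕ) :
    fittingSeries G n ≤ fittingSeries G (n + 1) := by
  rw [fittingSeries_succ]
  intro x hx
  simp only [Subgroup.mem_comap, QuotientGroup.mk'_apply]
  have : (QuotientGroup.mk x : G ⧸ fittingSeries G n) = 1 := (QuotientGroup.eq_one_iff x).2 hx
  rw [this]; exact Subgroup.one_mem _

theorem fittingSeries_mono (G : Type*) [Group G] : Monotone (fittingSeries G) :=
  monotone_nat_of_le_succ (fittingSeries_le_succ G)

/-- A subgroup all of whose commutators are trivial is nilpotent (as a group). -/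
theorem isNilpotent_of_forall_commutator {H : Subgroup G}
    (h : ∀ x ∈ H, ∀ y ∈ H, ⁅x, y⁆ = 1) : Group.IsNilpotent H := by
  rw [nilpotent_iff_lowerCentralSeries]
  refine ⟨1, ?_⟩
  rw [lowerCentralSeries_one]
  rw [commutator_def, eq_bot_iff, Subgroup.commutator_le]
  intro a _ b _
  have hab : ((⁅a, b⁆ : H) : G) = ⁅(a : G), (b : G)⁆ := rfl
  have : ((⁅a, b⁆ : H) : G) = 1 := by rw [hab]; exact h a a.2 b b.2
  simpa [Subgroup.mem_bot] using Subtype.ext this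

end Basics

section Series
variable {G : Type*} [Group G]

/-- Nilpotency passes to images of subgroups. -/
theorem isNilpotent_map {G' : Type*} [Group G'] (f : G →* G') {H : Subgroup G}
    (hH : Group.IsNilpotent H) : Group.IsNilpotent (H.map f) := by
  have : H.map f = (f.comp H.subtype).range := by
    ext x
    constructor
    · intro hx
      rcases Subgroup.mem_map.1 hx with ⟨y, hy, rfl⟩
      exact ⟨⟨y, hy⟩, rfl⟩
    · rintro ⟨⟨y, hy⟩, rfl⟩
      exact Subgroup.mem_map.2 ⟨y, hy, rfl⟩
  rw [this]
  haveI := hH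
  exact nilpotent_of_surjective (f.comp H.subtype).rangeRestrict
    (f.comp H.subtype).rangeRestrict_surjective

/-- A normal series with abelian factors witnesses that the Fitting series terminates. -/
theorem fittingSeries_eq_top_of_series (m : ℕ) (N : ℕ → Subgroup G)
    (h0 : N 0 = ⊥) (htop : N m = ⊤) (hnorm : ∀ i, (N i).Normal)
    (hab : ∀ i, ∀ x ∈ N (i + 1), ∀ y ∈ N (i + 1), ⁅x, y⁆ ∈ N i) :
    fittingSeries G m = ⊤ := by
  have key : ∀ i, N i ≤ fittingSeries G i := by
    intro i
    induction i with
    | zero => rw [h0, fittingSeries_zero]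
    | succ i ih =>
      rw [fittingSeries_succ]
      intro x hx
      simp only [Subgroup.mem_comap, QuotientGroup.mk'_apply]
      set F := fittingSeries G i
      have : ((N (i+1)).map (QuotientGroup.mk' F)) ≤ FittingSubgroup (G ⧸ F) := by
        apply le_fittingSubgroup
        · exact Subgroup.Normal.map (hnorm (i+1)) _ (QuotientGroup.mk'_surjective F)
        · apply isNilpotent_of_forall_commutator
          rintro a ha b hb
          rcases Subgroup.mem_map.1 ha with ⟨a', ha', rfl⟩
          rcases Subgroup.mem_map.1 hb with ⟨b', hb', rfl⟩
          have : ⁅(QuotientGroup.mk' F) a', (QuotientGroup.mk' F) b'⁆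
              = (QuotientGroup.mk' F) ⁅a', b'⁆ := by
            simp [commutatorElement_def]
          rw [this]
          have : ⁅a', b'⁆ ∈ F := ih (hab i a' ha' b' hb')
          exact (QuotientGroup.eq_one_iff _).2 this
      exact this (Subgroup.mem_map_of_mem _ hx)
  rw [← top_le_iff, ← htop]; exact key m

end Series

section Wreath
variable {A B : Type*} [Group A] [Group B]

open SemidirectProduct

theorem wreathAction_apply (b : B) (f : B → A) (c : B) :
    wreathAction A B b f c = f (b⁻¹ * c) := rfl

/-- The subgroup `S ^ B` of the regular wreath product. -/
def baseSubgroup (S : Subgroup A) : Subgroup (regularWreath A B) :=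
  (Subgroup.pi Set.univ fun _ => S).map SemidirectProduct.inl

theorem mem_baseSubgroup {S : Subgroup A} {x : regularWreath A B} :
    x ∈ baseSubgroup S ↔ x.right = 1 ∧ ∀ c, x.left c ∈ S := by
  constructor
  · intro hx
    rcases Subgroup.mem_map.1 hx with ⟨g, hg, rfl⟩
    exact ⟨rfl, fun c => hg c trivial⟩
  · rintro ⟨h1, h2⟩
    refine Subgroup.mem_map.2 ⟨x.left, fun c _ => h2 c, ?_⟩
    exact SemidirectProduct.ext rfl h1.symm

theorem baseSubgroup_mono {S T : Subgroup A} (h : S ≤ T) :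
    (baseSubgroup (B := B) S) ≤ baseSubgroup T := by
  intro x hx
  rw [mem_baseSubgroup] at hx ⊢
  exact ⟨hx.1, fun c => h (hx.2 c)⟩

theorem baseSubgroup_bot : (baseSubgroup (B := B) (⊥ : Subgroup A)) = ⊥ := by
  ext x
  rw [mem_baseSubgroup]
  constructor
  · rintro ⟨h1, h2⟩
    have : x.left = 1 := funext fun c => h2 c
    rw [Subgroup.mem_bot]
    exact SemidirectProduct.ext this h1
  · rintro rfl
    exact ⟨rfl, fun c => Subgroup.mem_bot.2 rfl⟩

theorem mem_baseSubgroup_top {x : regularWreath A B} :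
    x ∈ baseSubgroup (⊤ : Subgroup A) ↔ x.right = 1 := by
  rw [mem_baseSubgroup]
  exact ⟨fun h => h.1, fun h => ⟨h, fun c => trivial⟩⟩

theorem baseSubgroup_top_ne_top [Nontrivial B] :
    (baseSubgroup (B := B) (⊤ : Subgroup A)) ≠ ⊤ := by
  intro h
  obtain ⟨b, hb⟩ := exists_ne (1 : B)
  have : (inr b : regularWreath A B) ∈ baseSubgroup (⊤ : Subgroup A) := h ▸ Subgroup.mem_top _
  rw [mem_baseSubgroup_top] at this
  exact hb this

theorem conj_left_apply (g x : regularWreath A B) (hx : x.right = 1) (c : B) :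
    (g * x * g⁻¹).left c = g.left c * x.left (g.right⁻¹ * c) * (g.left c)⁻¹ := by
  simp [hx, wreathAction, wreathAut, mul_assoc]

theorem baseSubgroup_normal {S : Subgroup A} (hS : S.Normal) :
    (baseSubgroup (B := B) S).Normal := by
  constructor
  intro x hx g
  rw [mem_baseSubgroup] at hx ⊢
  constructor
  · simp [hx.1]
  · intro c
    rw [conj_left_apply g x hx.1 c]
    exact hS.conj_mem _ (hx.2 _) _

theorem conj_inl (v : regularWreath A B) (g : B → A) :
    v * SemidirectProduct.inl g * v⁻¹ =
      SemidirectProduct.inl (v.left * wreathAction A B v.right g * v.left⁻¹) := by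
  refine SemidirectProduct.ext ?_ ?_
  · simp [mul_assoc]
  · simp

theorem commutator_inl (v : regularWreath A B) (g : B → A) :
    ⁅v, SemidirectProduct.inl g⁆ =
      (SemidirectProduct.inl (v.left * wreathAction A B v.right g * v.left⁻¹ * g⁻¹) :
        regularWreath A B) := by
  refine SemidirectProduct.ext ?_ ?_ <;>
    simp [commutatorElement_def, mul_assoc]

end Wreath

section WreathExp
variable {A B : Type*} [Group A] [Group B]

open SemidirectProduct

theorem wreath_pow_eq_one {q m : ℕ} (hB : ∀ b : B, b ^ q = 1) (hA : ∀ a : A, a ^ m = 1)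
    (x : regularWreath A B) : x ^ (q * m) = 1 := by
  have h1 : (rightHom (x ^ q) : B) = 1 := by rw [map_pow]; exact hB _
  have h2 : x ^ q ∈ (inl : (B → A) →* regularWreath A B).range := by
    rw [range_inl_eq_ker_rightHom]; exact h1
  obtain ⟨g, hg⟩ := h2
  rw [pow_mul, ← hg, ← map_pow]
  have : g ^ m = 1 := by
    funext c
    have : (g ^ m) c = (g c) ^ m := rfl
    rw [this, hA]; rfl
  rw [this, map_one]

theorem exponent_dvd_of_wreath {q m : ℕ} (hB : ∀ b : B, b ^ q = 1) (hA : ∀ a : A, a ^ m = 1) :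
    Monoid.exponent (regularWreath A B) ∣ q * m :=
  Monoid.exponent_dvd_of_forall_pow_eq_one (wreath_pow_eq_one hB hA)

theorem exponent_base_dvd : Monoid.exponent A ∣ Monoid.exponent (regularWreath A B) := by
  apply Monoid.exponent_dvd_of_forall_pow_eq_one
  intro a
  have h : ((inl (fun _ => a) : regularWreath A B)) ^ Monoid.exponent (regularWreath A B) = 1 :=
    Monoid.pow_exponent_eq_one _
  rw [← map_pow] at h
  have h2 : ((fun _ => a) : B → A) ^ Monoid.exponent (regularWreath A B) = 1 :=
    inl_injective (by rw [h, map_one])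
  have := congr_fun h2 1
  simpa using this

theorem exponent_top_dvd : Monoid.exponent B ∣ Monoid.exponent (regularWreath A B) := by
  apply Monoid.exponent_dvd_of_forall_pow_eq_one
  intro b
  have h : ((inr b : regularWreath A B)) ^ Monoid.exponent (regularWreath A B) = 1 :=
    Monoid.pow_exponent_eq_one _
  rw [← map_pow] at h
  exact inr_injective (by rw [h, map_one])

end WreathExp

section LCS

theorem lcs_le_map_of_surjective {G G' : Type*} [Group G] [Group G'] (f : G →* G')
    (hf : Function.Surjective f) (n : ℕ) :
    Subgroup.lowerCentralSeries (⊤ : Subgroup G') n ≤ Subgroup.map f (Subgroup.lowerCentralSeries (⊤ : Subgroup G) n) := by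
  induction n with
  | zero =>
    rw [lowerCentralSeries_zero, lowerCentralSeries_zero, Subgroup.map_top_of_surjective f hf]
  | succ n ih =>
    rw [lowerCentralSeries_succ, lowerCentralSeries_succ]
    calc ⁅Subgroup.lowerCentralSeries (⊤ : Subgroup G') n, (⊤ : Subgroup G')⁆
        ≤ ⁅Subgroup.map f (Subgroup.lowerCentralSeries (⊤ : Subgroup G) n), Subgroup.map f ⊤⁆ := by
          apply Subgroup.commutator_mono ih
          rw [Subgroup.map_top_of_surjective f hf]
      _ = Subgroup.map f ⁅Subgroup.lowerCentralSeries (⊤ : Subgroup G) n, (⊤ : Subgroup G)⁆ :=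
          (Subgroup.map_commutator (Subgroup.lowerCentralSeries (⊤ : Subgroup G) n) ⊤ f).symm

theorem comap_fittingSubgroup_le {G G' : Type*} [Group G] [Group G'] (q : G →* G')
    (hq : Function.Surjective q) {T : Subgroup G} (hker : q.ker ≤ T)
    (h : ∀ R : Subgroup G', R.Normal → Group.IsNilpotent R → R.comap q ≤ T) :
    (FittingSubgroup G').comap q ≤ T := by
  have h2 : FittingSubgroup G' ≤ T.map q := by
    apply sSup_le
    rintro R ⟨hn, hnil⟩
    have h3 : R.comap q ≤ T := h R hn hnil
    have h4 : R = (R.comap q).map q := (Subgroup.map_comap_eq_self_of_surjective hq R).symm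
    rw [h4]
    exact Subgroup.map_mono h3
  intro x hx
  have hx2 : q x ∈ T.map q := h2 hx
  rcases Subgroup.mem_map.1 hx2 with ⟨t, ht, hqt⟩
  have : t⁻¹ * x ∈ q.ker := by
    rw [MonoidHom.mem_ker, map_mul, map_inv, hqt]
    group
  have hx3 : x = t * (t⁻¹ * x) := by group
  rw [hx3]
  exact Subgroup.mul_mem _ ht (hker this)

end LCS

section Key
variable {A B : Type*} [Group A] [Group B] [Finite A] [Finite B]

open SemidirectProduct

instance : Finite (regularWreath A B) :=
  Finite.of_injective (fun x => (x.left, x.right))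
    (fun x y h => SemidirectProduct.ext (congrArg Prod.fst h) (congrArg Prod.snd h))

theorem key_step1 {p : ℕ} [Fact p.Prime]
    (hB : ∀ b : B, b ^ p = 1)
    (hcop : Nat.Coprime (Monoid.exponent A) p)
    {D : Subgroup A} [hD : D.Normal] {a₀ : A} (ha₀ : a₀ ∉ D)
    {K : Subgroup (regularWreath A B)} [hK : K.Normal]
    (hKD : K ≤ baseSubgroup D)
    {R : Subgroup ((regularWreath A B) ⧸ K)} (hR : R.Normal)
    (hRnil : Group.IsNilpotent R) :
    R.comap (QuotientGroup.mk' K) ≤ baseSubgroup (⊤ : Subgroup A) := by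
  classical
  set q := QuotientGroup.mk' K with hq
  have hqsurj : Function.Surjective q := QuotientGroup.mk'_surjective K
  set H := R.comap q with hH
  haveI hHnorm : H.Normal := Subgroup.Normal.comap hR q
  haveI := hR
  intro w hw
  rw [mem_baseSubgroup_top]
  by_contra hb
  -- Sylow machinery in ↥R
  haveI : Finite (Subgroup ↥R) :=
    Finite.of_injective (fun S => (S : Set ↥R)) SetLike.coe_injective
  haveI : Finite (Sylow p ↥R) :=
    Finite.of_injective (fun P => (P : Subgroup ↥R)) (fun P Q h => Sylow.ext h)
  haveI := hRnil
  have htfae : Group.IsNilpotent ↥R ↔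
      ∀ (p : ℕ) (_hp : Fact p.Prime) (P : Sylow p ↥R), (P : Subgroup ↥R).Normal :=
    (isNilpotent_of_finite_tfae (G := ↥R)).out 0 3
  have hsyl : ∀ P : Sylow p ↥R, (P : Subgroup ↥R).Normal :=
    fun P => htfae.mp hRnil p inferInstance P
  obtain ⟨S⟩ : Nonempty (Sylow p ↥R) := inferInstance
  have hSchar : (S : Subgroup ↥R).Characteristic := S.characteristic_of_normal (hsyl S)
  set S' : Subgroup ((regularWreath A B) ⧸ K) := (S : Subgroup ↥R).map R.subtype with hS'
  have hS'le : S' ≤ R := by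
    rintro x hx
    rcases Subgroup.mem_map.1 hx with ⟨s, _, rfl⟩
    exact s.2
  have hS'norm : ∀ g : (regularWreath A B) ⧸ K, ∀ x ∈ S', g * x * g⁻¹ ∈ S' := by
    intro g x hx
    rcases Subgroup.mem_map.1 hx with ⟨s, hs, rfl⟩
    have hconj : g * (R.subtype s) * g⁻¹ ∈ R := hR.conj_mem _ s.2 g
    have : MulAut.conjNormal g s ∈ (S : Subgroup ↥R) := by
      have hfix := hSchar.fixed (MulAut.conjNormal g)
      rw [← hfix] at hs
      exact Subgroup.mem_comap.1 hs
    refine Subgroup.mem_map.2 ⟨MulAut.conjNormal g s, this, ?_⟩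
    simpa using MulAut.conjNormal_apply g s
  -- the image of the base group
  set Abar : Subgroup ((regularWreath A B) ⧸ K) := (baseSubgroup ⊤).map q with hAbar
  haveI : (baseSubgroup (B := B) (⊤ : Subgroup A)).Normal :=
    baseSubgroup_normal inferInstance
  have hAbarnorm : Abar.Normal := Subgroup.Normal.map inferInstance q hqsurj
  have hexpA : ∀ x ∈ Abar, x ^ Monoid.exponent A = 1 := by
    intro x hx
    rcases Subgroup.mem_map.1 hx with ⟨v, hv, rfl⟩
    rw [← map_pow]
    have hv1 : v.right = 1 := mem_baseSubgroup_top.1 hv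
    have : v ^ Monoid.exponent A = 1 := by
      have hvinl : v ∈ (inl : (B → A) →* regularWreath A B).range := by
        rw [range_inl_eq_ker_rightHom, MonoidHom.mem_ker]
        exact hv1
      obtain ⟨g, rfl⟩ := hvinl
      rw [← map_pow]
      have : g ^ Monoid.exponent A = 1 := by
        funext c
        have h1 : (g ^ Monoid.exponent A) c = (g c) ^ Monoid.exponent A := rfl
        rw [h1, Monoid.pow_exponent_eq_one]; rfl
      rw [this, map_one]
    rw [this, map_one]
  have hdisj : ∀ x, x ∈ S' → x ∈ Abar → x = 1 := by
    intro x hxS hxA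
    have hxp : ∃ k, x ^ p ^ k = 1 := by
      have hpg : IsPGroup p S' := (S.isPGroup').map R.subtype
      obtain ⟨k, hk⟩ := hpg ⟨x, hxS⟩
      exact ⟨k, by simpa [Subtype.ext_iff] using hk⟩
    obtain ⟨k, hk⟩ := hxp
    have h1 : orderOf x ∣ p ^ k := orderOf_dvd_of_pow_eq_one hk
    have h2 : orderOf x ∣ Monoid.exponent A := orderOf_dvd_of_pow_eq_one (hexpA x hxA)
    have hco : Nat.Coprime (Monoid.exponent A) (p ^ k) := hcop.pow_right k
    have h3 : orderOf x ∣ 1 := hco ▸ Nat.dvd_gcd h2 h1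
    exact orderOf_eq_one_iff.mp (Nat.dvd_one.mp h3)
  have hcomm : ∀ x ∈ S', ∀ y ∈ Abar, x * y = y * x := by
    intro x hx y hy
    have h1 : ⁅x, y⁆ ∈ S' := by
      have e : ⁅x, y⁆ = x * (y * x⁻¹ * y⁻¹) := by group
      rw [e]
      exact Subgroup.mul_mem _ hx (hS'norm y _ (Subgroup.inv_mem _ hx))
    have h2 : ⁅x, y⁆ ∈ Abar := by
      have e : ⁅x, y⁆ = (x * y * x⁻¹) * y⁻¹ := by group
      rw [e]
      exact Subgroup.mul_mem _ (hAbarnorm.conj_mem y hy x) (Subgroup.inv_mem _ hy)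
    have h3 : ⁅x, y⁆ = 1 := hdisj _ h1 h2
    exact commutatorElement_eq_one_iff_mul_comm.mp h3
  -- build the p-element y with nontrivial right component
  set m := Monoid.exponent A with hm
  have hmpos : m ≠ 0 := Monoid.exponent_ne_zero_of_finite
  set v := w ^ m with hv
  have hvright : v.right = w.right ^ m :=
    map_pow (rightHom : regularWreath A B →* B) w m
  have hbm : w.right ^ m ≠ 1 := by
    intro hcon
    have h1 : orderOf w.right ∣ m := orderOf_dvd_of_pow_eq_one hcon
    have h2 : orderOf w.right ∣ p := orderOf_dvd_of_pow_eq_one (hB w.right)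
    have h3 : orderOf w.right ∣ 1 := hcop ▸ Nat.dvd_gcd h1 h2
    exact hb (orderOf_eq_one_iff.mp (Nat.dvd_one.mp h3))
  have hvH : v ∈ H := Subgroup.pow_mem _ hw m
  have hyR : q v ∈ R := hvH
  have hyp : (q v) ^ p = 1 := by
    rw [← map_pow]
    have : v ^ p = w ^ (p * m) := by rw [hv, ← pow_mul, mul_comm]
    rw [this, wreath_pow_eq_one hB (fun a => Monoid.pow_exponent_eq_one a), map_one]
  -- q v lies in the Sylow subgroup S'
  have hyS' : q v ∈ S' := by
    set yt : ↥R := ⟨q v, hyR⟩ with hyt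
    have hytp : yt ^ p = 1 := by
      apply Subtype.ext
      simpa using hyp
    have hzp : IsPGroup p (Subgroup.zpowers yt) := by
      intro g
      refine ⟨1, ?_⟩
      obtain ⟨j, hj⟩ := Subgroup.mem_zpowers_iff.1 g.2
      apply Subtype.ext
      have : ((g : ↥R)) ^ (p ^ 1) = ((yt ^ (j : ℤ)) ^ (p : ℕ) : ↥R) := by
        rw [hj]; norm_num
      rw [Subgroup.coe_pow, this, ← zpow_natCast, ← zpow_mul, mul_comm, zpow_mul,
        zpow_natCast, hytp, one_zpow]
      rfl
    obtain ⟨T, hT⟩ := hzp.exists_le_sylow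
    haveI : Unique (Sylow p ↥R) := S.unique_of_normal (hsyl S)
    have hTS : T = S := Subsingleton.elim T S
    have : yt ∈ (S : Subgroup ↥R) := by
      rw [← hTS]
      exact hT (Subgroup.mem_zpowers yt)
    exact Subgroup.mem_map.2 ⟨yt, this, rfl⟩
  -- the contradiction
  set g₀ : B → A := fun c => if c = 1 then a₀ else 1 with hg₀
  have hing : (inl g₀ : regularWreath A B) ∈ baseSubgroup (⊤ : Subgroup A) :=
    mem_baseSubgroup_top.2 rfl
  have hgbar : q (inl g₀) ∈ Abar := Subgroup.mem_map.2 ⟨inl g₀, hing, rfl⟩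
  have hc : ⁅q v, q (inl g₀)⁆ = 1 :=
    commutatorElement_eq_one_iff_mul_comm.mpr (hcomm _ hyS' _ hgbar)
  have hcK : ⁅v, (inl g₀ : regularWreath A B)⁆ ∈ K := by
    have : q ⁅v, (inl g₀ : regularWreath A B)⁆ = 1 := by
      rw [map_commutatorElement]; exact hc
    rwa [← MonoidHom.mem_ker, QuotientGroup.ker_mk'] at this
  have hcD : ⁅v, (inl g₀ : regularWreath A B)⁆ ∈ baseSubgroup D := hKD hcK
  rw [commutator_inl] at hcD
  rw [mem_baseSubgroup] at hcD
  have hcomp := hcD.2 v.right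
  have hvr1 : v.right ≠ 1 := by rw [hvright]; exact hbm
  have he1 : (wreathAction A B v.right g₀) v.right = a₀ := by
    rw [wreathAction_apply, inv_mul_cancel, hg₀]
    simp
  have he2 : g₀ v.right = 1 := by
    rw [hg₀]; simp [hvr1]
  have he3 : (v.left * wreathAction A B v.right g₀ * v.left⁻¹ * g₀⁻¹) v.right
      = v.left v.right * a₀ * (v.left v.right)⁻¹ := by
    have : (v.left * wreathAction A B v.right g₀ * v.left⁻¹ * g₀⁻¹) v.right
        = v.left v.right * (wreathAction A B v.right g₀) v.right * (v.left v.right)⁻¹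
          * (g₀ v.right)⁻¹ := rfl
    rw [this, he1, he2]
    simp
  rw [left_inl, he3] at hcomp
  have : a₀ ∈ D := by
    have h5 := hD.conj_mem _ hcomp (v.left v.right)⁻¹
    simpa [mul_assoc] using h5
  exact ha₀ this

end Key

section Key2
variable {A B : Type*} [Group A] [Group B] [Finite A] [Finite B]

open SemidirectProduct

theorem key_lemma {p : ℕ} [Fact p.Prime]
    (hB : ∀ b : B, b ^ p = 1)
    (hcop : Nat.Coprime (Monoid.exponent A) p)
    {D : Subgroup A} [hD : D.Normal] {a₀ : A} (ha₀ : a₀ ∉ D)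
    {K : Subgroup (regularWreath A B)} [hK : K.Normal]
    (hKD : K ≤ baseSubgroup D)
    {R : Subgroup ((regularWreath A B) ⧸ K)} (hR : R.Normal)
    (hRnil : Group.IsNilpotent R) :
    R.comap (QuotientGroup.mk' K) ≤
      baseSubgroup ((FittingSubgroup (A ⧸ D)).comap (QuotientGroup.mk' D)) := by
  classical
  set q := QuotientGroup.mk' K with hqdef
  set H := R.comap q with hHdef
  haveI hHnorm : H.Normal := Subgroup.Normal.comap hR q
  have hstep1 : H ≤ baseSubgroup ⊤ := key_step1 hB hcop ha₀ hKD hR hRnil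
  intro w hw
  rw [mem_baseSubgroup]
  have hwr : w.right = 1 := mem_baseSubgroup_top.1 (hstep1 hw)
  refine ⟨hwr, ?_⟩
  intro c
  rw [Subgroup.mem_comap]
  have hmul : ∀ x y : ↥H,
      ((x * y : ↥H) : regularWreath A B).left c
        = ((x : regularWreath A B)).left c * ((y : regularWreath A B)).left c := by
    intro x y
    have hxr : (x : regularWreath A B).right = 1 := mem_baseSubgroup_top.1 (hstep1 x.2)
    have h1 : ((x * y : ↥H) : regularWreath A B).left
        = (x : regularWreath A B).left *
          wreathAction A B (x : regularWreath A B).right (y : regularWreath A B).left := rfl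
    rw [h1, hxr, map_one]
    rfl
  set η : ↥H →* A ⧸ D :=
    { toFun := fun h => QuotientGroup.mk ((h : regularWreath A B).left c)
      map_one' := by
        show QuotientGroup.mk (((1 : ↥H) : regularWreath A B).left c) = (1 : A ⧸ D)
        rfl
      map_mul' := by
        intro x y
        show QuotientGroup.mk (((x * y : ↥H) : regularWreath A B).left c)
          = QuotientGroup.mk ((x : regularWreath A B).left c)
            * QuotientGroup.mk ((y : regularWreath A B).left c)
        rw [hmul x y, QuotientGroup.mk_mul] } with hηdef
  set E := η.range with hEdef
  set χ : ↥H →* ↥R :=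
    { toFun := fun h => ⟨q h.1, h.2⟩
      map_one' := Subtype.ext (map_one q)
      map_mul' := fun x y => Subtype.ext (map_mul q x.1 y.1) } with hχdef
  have hχsurj : Function.Surjective χ := by
    rintro ⟨r, hr⟩
    obtain ⟨w', hw'⟩ := QuotientGroup.mk'_surjective K r
    exact ⟨⟨w', Subgroup.mem_comap.2 (by rw [hqdef, hw']; exact hr)⟩, Subtype.ext hw'⟩
  obtain ⟨j, hj⟩ := nilpotent_iff_lowerCentralSeries.mp hRnil
  have hlcsH : Subgroup.lowerCentralSeries (⊤ : Subgroup ↥H) j ≤ χ.ker := by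
    intro x hx
    rw [MonoidHom.mem_ker]
    have h2 : χ x ∈ Subgroup.map χ (Subgroup.lowerCentralSeries (⊤ : Subgroup ↥H) j) := Subgroup.mem_map_of_mem χ hx
    have h3 := lowerCentralSeries.map χ j h2
    rw [hj] at h3
    exact Subgroup.mem_bot.1 h3
  have hnilE : Group.IsNilpotent ↥E := by
    rw [nilpotent_iff_lowerCentralSeries]
    refine ⟨j, ?_⟩
    rw [eq_bot_iff]
    have h1 : Subgroup.lowerCentralSeries (⊤ : Subgroup ↥E) j ≤ Subgroup.map η.rangeRestrict (Subgroup.lowerCentralSeries (⊤ : Subgroup ↥H) j) :=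
      lcs_le_map_of_surjective η.rangeRestrict η.rangeRestrict_surjective j
    refine h1.trans ?_
    intro x hx2
    rcases Subgroup.mem_map.1 hx2 with ⟨h, hh, rfl⟩
    have hker : χ h = 1 := MonoidHom.mem_ker.1 (hlcsH hh)
    have hK1 : (h : regularWreath A B) ∈ K := by
      have : q (h : regularWreath A B) = 1 := congrArg Subtype.val hker
      rwa [hqdef, ← MonoidHom.mem_ker, QuotientGroup.ker_mk'] at this
    have hD1 : (h : regularWreath A B).left c ∈ D := (mem_baseSubgroup.1 (hKD hK1)).2 c
    rw [Subgroup.mem_bot]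
    apply Subtype.ext
    show η h = 1
    rw [hηdef]
    exact (QuotientGroup.eq_one_iff _).2 hD1
  have hEnorm : E.Normal := by
    constructor
    intro x hx t
    rcases hx with ⟨h, rfl⟩
    obtain ⟨u, rfl⟩ := QuotientGroup.mk_surjective t
    set gc : regularWreath A B := inl (fun _ => u) with hgc
    have hgH : gc * (h : regularWreath A B) * gc⁻¹ ∈ H :=
      hHnorm.conj_mem _ h.2 _
    refine ⟨⟨_, hgH⟩, ?_⟩
    have hhr : (h : regularWreath A B).right = 1 := mem_baseSubgroup_top.1 (hstep1 h.2)
    have hl : (gc * (h : regularWreath A B) * gc⁻¹).left c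
        = u * (h : regularWreath A B).left c * u⁻¹ := by
      rw [conj_left_apply gc _ hhr c, hgc]
      simp
    show QuotientGroup.mk ((gc * (h : regularWreath A B) * gc⁻¹).left c) = _
    rw [hl]
    rfl
  have hEF : E ≤ FittingSubgroup (A ⧸ D) := le_fittingSubgroup hEnorm hnilE
  exact hEF ⟨⟨w, hw⟩, rfl⟩

end Key2

section Lower
variable {A B : Type*} [Group A] [Group B] [Finite A] [Finite B]

theorem wreath_fittingSeries_ne_top {p : ℕ} [Fact p.Prime] [Nontrivial B]
    (hB : ∀ b : B, b ^ p = 1) (hcop : Nat.Coprime (Monoid.exponent A) p)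
    {n : ℕ} (hA : ∀ k < n, fittingSeries A k ≠ ⊤) :
    ∀ k ≤ n, fittingSeries (regularWreath A B) k ≠ ⊤ := by
  have hmain : ∀ k, k ≤ n →
      fittingSeries (regularWreath A B) k ≤ baseSubgroup (fittingSeries A k) := by
    intro k
    induction k with
    | zero => intro _; rw [fittingSeries_zero, fittingSeries_zero, ← baseSubgroup_bot (B := B)]
    | succ k ih =>
      intro hk
      have hk' : k < n := Nat.lt_of_succ_le hk
      have ih' := ih (Nat.le_of_lt hk')
      obtain ⟨a₀, ha₀⟩ : ∃ a, a ∉ fittingSeries A k := by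
        by_contra hcon
        push_neg at hcon
        exact hA k hk' ((Subgroup.eq_top_iff' _).mpr hcon)
      rw [fittingSeries_succ]
      apply comap_fittingSubgroup_le _ (QuotientGroup.mk'_surjective _)
      · rw [QuotientGroup.ker_mk']
        exact ih'.trans (baseSubgroup_mono (fittingSeries_le_succ A k))
      · intro R hn hnil
        have h := key_lemma (p := p) hB hcop ha₀ ih' hn hnil
        rw [fittingSeries_succ A k]
        exact h
  intro k hk hcon
  have h1 : fittingSeries (regularWreath A B) k ≤ baseSubgroup (⊤ : Subgroup A) :=
    (fittingSeries_mono _ hk).trans ((hmain n le_rfl).trans (baseSubgroup_mono le_top))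
  rw [hcon] at h1
  exact baseSubgroup_top_ne_top (top_le_iff.mp h1)

end Lower

section Upper
variable {A B : Type*} [Group A] [Group B]

open SemidirectProduct

theorem commutator_right (x y : regularWreath A B) (h : x.right * y.right = y.right * x.right) :
    (⁅x, y⁆).right = 1 := by
  have h1 : (⁅x, y⁆).right = x.right * y.right * x.right⁻¹ * y.right⁻¹ := rfl
  rw [h1, h]
  group

theorem commutator_left_apply' (x y : regularWreath A B) (hx : x.right = 1) (hy : y.right = 1)
    (c : B) : (⁅x, y⁆).left c = ⁅x.left c, y.left c⁆ := by
  simp [commutatorElement_def, hx, hy, Pi.mul_apply, mul_assoc]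

theorem wreath_abelian_series (hBab : ∀ x y : B, x * y = y * x)
    {m : ℕ} (N : ℕ → Subgroup A) (h0 : N 0 = ⊥) (htop : ∀ i, m ≤ i → N i = ⊤)
    (hnorm : ∀ i, (N i).Normal)
    (hab : ∀ i, ∀ x ∈ N (i + 1), ∀ y ∈ N (i + 1), ⁅x, y⁆ ∈ N i) :
    ∃ M : ℕ → Subgroup (regularWreath A B),
      M 0 = ⊥ ∧ (∀ i, m + 1 ≤ i → M i = ⊤) ∧ (∀ i, (M i).Normal) ∧
      (∀ i, ∀ x ∈ M (i + 1), ∀ y ∈ M (i + 1), ⁅x, y⁆ ∈ M i) := by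
  classical
  refine ⟨fun i => if m + 1 ≤ i then ⊤ else baseSubgroup (N i), ?_, ?_, ?_, ?_⟩
  · simp only [if_neg (by omega : ¬ m + 1 ≤ 0), h0, baseSubgroup_bot]
  · intro i hi; simp only [if_pos hi]
  · intro i
    by_cases hi : m + 1 ≤ i
    · simp only [if_pos hi]; infer_instance
    · simp only [if_neg hi]; exact baseSubgroup_normal (hnorm i)
  · intro i x hx y hy
    by_cases hi : m + 1 ≤ i
    · simp only [if_pos (by omega : m + 1 ≤ i + 1)] at hx hy
      simp only [if_pos hi]
      trivial
    · by_cases him : i = m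
      · simp only [if_neg (show ¬ m + 1 ≤ i by omega)]
        rw [mem_baseSubgroup]
        refine ⟨commutator_right x y (hBab _ _), ?_⟩
        intro c
        rw [htop i (by omega)]
        trivial
      · have hi1 : ¬ (m + 1 ≤ i + 1) := by omega
        simp only [if_neg hi1] at hx hy
        simp only [if_neg hi]
        rw [mem_baseSubgroup] at hx hy ⊢
        refine ⟨commutator_right x y (by rw [hx.1, hy.1]), ?_⟩
        intro c
        rw [commutator_left_apply' x y hx.1 hy.1 c]
        exact hab i _ (hx.2 c) _ (hy.2 c)

end Upper

section Omega

theorem bigOmega_prime {q : ℕ} (hq : q.Prime) : bigOmega q = 1 := by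
  rw [bigOmega, Nat.primeFactorsList_prime hq]; rfl

theorem bigOmega_mul {a b : ℕ} (ha : a ≠ 0) (hb : b ≠ 0) :
    bigOmega (a * b) = bigOmega a + bigOmega b := by
  rw [bigOmega, bigOmega, bigOmega, ← List.length_append]
  exact (Nat.perm_primeFactorsList_mul ha hb).length_eq

theorem bigOmega_prod_primes (n : ℕ) (p : ℕ → ℕ) (hp : ∀ i ≤ n, (p i).Prime) :
    bigOmega (∏ i ∈ Finset.range (n + 1), p i) = n + 1 := by
  induction n with
  | zero => simpa [bigOmega_prime] using bigOmega_prime (hp 0 le_rfl)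
  | succ n ih =>
    rw [Finset.prod_range_succ, bigOmega_mul, ih (fun i hi => hp i (by omega)),
      bigOmega_prime (hp (n+1) le_rfl)]
    · exact Finset.prod_ne_zero_iff.2 fun i hi => (hp i (by
        have := Finset.mem_range.1 hi; omega)).ne_zero
    · exact (hp (n+1) le_rfl).ne_zero

end Omega

section Main

theorem finite_iterWreath (P : ℕ → GrpCat.{u}) (n : ℕ) (hfin : ∀ i ≤ n, Finite (P i)) :
    Finite (iterWreath P n) := by
  induction n with
  | zero => exact hfin 0 le_rfl
  | succ n ih =>
    haveI : Finite (iterWreath P n) := ih fun i hi => hfin i (by omega)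
    haveI : Finite (P (n + 1)) := hfin (n + 1) le_rfl
    show Finite (regularWreath (iterWreath P n) (P (n + 1)))
    infer_instance

theorem main_aux : ∀ (n : ℕ) (p : ℕ → ℕ) (P : ℕ → GrpCat.{u}),
    (∀ i ≤ n, (p i).Prime) →
    (∀ i ≤ n, ∀ j ≤ n, i ≠ j → p i ≠ p j) →
    (∀ i ≤ n, Finite (P i)) →
    (∀ i ≤ n, Nontrivial (P i)) →
    (∀ i ≤ n, ∀ x y : P i, x * y = y * x) →
    (∀ i ≤ n, ∀ x : P i, x ^ p i = 1) →
    (∀ k ≤ n, fittingSeries (iterWreath P n) k ≠ ⊤) ∧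
    (∃ N : ℕ → Subgroup (iterWreath P n),
       N 0 = ⊥ ∧ (∀ i, n + 1 ≤ i → N i = ⊤) ∧ (∀ i, (N i).Normal) ∧
       (∀ i, ∀ x ∈ N (i + 1), ∀ y ∈ N (i + 1), ⁅x, y⁆ ∈ N i)) ∧
    Monoid.exponent (iterWreath P n) = ∏ i ∈ Finset.range (n + 1), p i := by
  intro n
  induction n with
  | zero =>
    intro p P hp hdist hfin hnt habel helem
    haveI : Finite (P 0) := hfin 0 le_rfl
    haveI : Nontrivial (P 0) := hnt 0 le_rfl
    refine ⟨?_, ?_, ?_⟩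
    · intro k hk
      interval_cases k
      rw [fittingSeries_zero]
      intro hcon
      obtain ⟨x, hx⟩ := exists_ne (1 : P 0)
      have hxmem : x ∈ (⊥ : Subgroup (P 0)) := by rw [show (⊥ : Subgroup (P 0)) = ⊤ from hcon]; trivial
      exact hx (Subgroup.mem_bot.1 hxmem)
    · classical
      refine ⟨fun i => if 1 ≤ i then ⊤ else ⊥, by simp, fun i hi => by simp [hi], ?_, ?_⟩
      · intro i
        by_cases hi : 1 ≤ i
        · simp only [if_pos hi]; infer_instance
        · simp only [if_neg hi]; infer_instance
      · intro i x _ y _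
        by_cases hi : 1 ≤ i
        · simp only [if_pos hi]; trivial
        · simp only [if_neg hi, Subgroup.mem_bot]
          exact commutatorElement_eq_one_iff_mul_comm.mpr (habel 0 le_rfl x y)
    · have hdvd : Monoid.exponent (P 0) ∣ p 0 :=
        Monoid.exponent_dvd_of_forall_pow_eq_one (helem 0 le_rfl)
      have hne1 : Monoid.exponent (P 0) ≠ 1 := Nat.ne_of_gt Monoid.one_lt_exponent
      rcases (Nat.Prime.eq_one_or_self_of_dvd (hp 0 le_rfl) _ hdvd) with h | h
      · exact absurd h hne1
      · rw [iterWreath]; simpa using h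
  | succ n ih =>
    intro p P hp hdist hfin hnt habel helem
    obtain ⟨hnA, ⟨N, hN0, hNtop, hNnorm, hNab⟩, hexpA⟩ :=
      ih p P (fun i hi => hp i (by omega)) (fun i hi j hj => hdist i (by omega) j (by omega))
        (fun i hi => hfin i (by omega)) (fun i hi => hnt i (by omega))
        (fun i hi => habel i (by omega)) (fun i hi => helem i (by omega))
    haveI : Finite (iterWreath P n) := finite_iterWreath P n fun i hi => hfin i (by omega)
    haveI : Finite (P (n + 1)) := hfin (n + 1) le_rfl
    haveI : Nontrivial (P (n + 1)) := hnt (n + 1) le_rfl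
    haveI : Fact (p (n + 1)).Prime := ⟨hp (n + 1) le_rfl⟩
    have hB : ∀ b : P (n + 1), b ^ p (n + 1) = 1 := helem (n + 1) le_rfl
    have hcop : Nat.Coprime (Monoid.exponent (iterWreath P n)) (p (n + 1)) := by
      rw [hexpA]
      apply Nat.Coprime.prod_left
      intro i hi
      have hi' : i ≤ n := by have := Finset.mem_range.1 hi; omega
      exact (Nat.coprime_primes (hp i (by omega)) (hp (n + 1) le_rfl)).mpr
        (hdist i (by omega) (n + 1) le_rfl (by omega))
    refine ⟨?_, ?_, ?_⟩
    · exact wreath_fittingSeries_ne_top hB hcop (fun k hk => hnA k (by omega))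
    · exact wreath_abelian_series (habel (n + 1) le_rfl) N hN0 hNtop hNnorm hNab
    · have h1 : Monoid.exponent (regularWreath (iterWreath P n) (P (n + 1)))
          ∣ p (n + 1) * Monoid.exponent (iterWreath P n) :=
        exponent_dvd_of_wreath hB (fun a => Monoid.pow_exponent_eq_one a)
      have hqB : Monoid.exponent (P (n + 1)) = p (n + 1) := by
        have hdvd : Monoid.exponent (P (n + 1)) ∣ p (n + 1) :=
          Monoid.exponent_dvd_of_forall_pow_eq_one hB
        rcases (Nat.Prime.eq_one_or_self_of_dvd (hp (n + 1) le_rfl) _ hdvd) with h | h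
        · exact absurd h (Nat.ne_of_gt Monoid.one_lt_exponent)
        · exact h
      have h2 : p (n + 1) * Monoid.exponent (iterWreath P n)
          ∣ Monoid.exponent (regularWreath (iterWreath P n) (P (n + 1))) := by
        apply Nat.Coprime.mul_dvd_of_dvd_of_dvd
        · exact hcop.symm
        · rw [← hqB]; exact exponent_top_dvd
        · exact exponent_base_dvd
      have h3 : Monoid.exponent (regularWreath (iterWreath P n) (P (n + 1)))
          = p (n + 1) * Monoid.exponent (iterWreath P n) := Nat.dvd_antisymm h1 h2
      show Monoid.exponent (regularWreath (iterWreath P n) (P (n + 1))) = _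
      rw [h3, hexpA, Finset.prod_range_succ (f := p) (n := n + 1)]
      exact mul_comm _ _

end Main

/-- The iterated regular wreath product of non-trivial elementary abelian `p i`-groups,
for pairwise distinct primes `p 0, …, p n`, has Fitting height `n + 1` and exponent
`p 0 ⋯ p n`; in particular its Fitting height equals `Ω` of its exponent. -/
theorem iterWreath_fittingHeight_eq_bigOmega_exponent
    (n : ℕ) (p : ℕ → ℕ) (P : ℕ → GrpCat.{u})
    (hp : ∀ i ≤ n, (p i).Prime)
    (hdist : ∀ i ≤ n, ∀ j ≤ n, i ≠ j → p i ≠ p j)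
    (hfin : ∀ i ≤ n, Finite (P i))
    (hnt : ∀ i ≤ n, Nontrivial (P i))
    (habel : ∀ i ≤ n, ∀ x y : P i, x * y = y * x)
    (helem : ∀ i ≤ n, ∀ x : P i, x ^ p i = 1) :
    fittingHeight (iterWreath P n) = n + 1 ∧
    Monoid.exponent (iterWreath P n) = ∏ i ∈ Finset.range (n + 1), p i ∧
    fittingHeight (iterWreath P n) = bigOmega (Monoid.exponent (iterWreath P n)) := by
  obtain ⟨hne, ⟨N, hN0, hNtop, hNnorm, hNab⟩, hexp⟩ :=
    main_aux n p P hp hdist hfin hnt habel helem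
  have hmem : fittingSeries (iterWreath P n) (n + 1) = ⊤ :=
    fittingSeries_eq_top_of_series (n + 1) N hN0 (hNtop (n + 1) le_rfl) hNnorm hNab
  have hh : fittingHeight (iterWreath P n) = n + 1 := by
    have hmem' : (n + 1) ∈ {m | fittingSeries (iterWreath P n) m = ⊤} := hmem
    have hle : fittingHeight (iterWreath P n) ≤ n + 1 := Nat.sInf_le hmem'
    refine le_antisymm hle ?_
    by_contra hlt
    push_neg at hlt
    have h2 : fittingSeries (iterWreath P n) (fittingHeight (iterWreath P n)) = ⊤ :=
      Nat.sInf_mem (⟨n + 1, hmem'⟩ : Set.Nonempty _)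
    exact hne _ (by omega) h2
  refine ⟨hh, hexp, ?_⟩
  rw [hh, hexp, bigOmega_prod_primes n p hp]
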